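/- If H ⊑* G and G is flat, then H is flat. -/

import Mathlib

/-!
Closure `X ↦ cl X` maps the closed sets of `H` injectively to closed sets of `G`, with inverse
`E ↦ E ∩ H`. For finite-dimensional closed sets of `H`, the condition `H ⊑* G` implies that
`cl` preserves dimension and commutes with binary, hence finite, intersections. So `cl` carries
every intersection in `Δ_H(Σ)` to one of the same dimension in `Δ_G(cl Σ)`, giving
`Δ_H(Σ) = Δ_G(cl Σ) ≥ d(⋃ cl Σ) ≥ d(⋃ Σ)`.
-/

open scoped Classical

/-- A combinatorial pregeometry (matroid) on the ground type `α`, given by a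
dimension (rank) function on finite subsets. -/
structure Pregeometry (α : Type*) [DecidableEq α] where
  dim : Finset α → ℕ
  dim_empty : dim ∅ = 0
  dim_le_insert : ∀ (A : Finset α) (x : α), dim A ≤ dim (insert x A)
  insert_le_dim : ∀ (A : Finset α) (x : α), dim (insert x A) ≤ dim A + 1
  submodular : ∀ A B : Finset α, dim (A ∪ B) + dim (A ∩ B) ≤ dim A + dim B

namespace Pregeometry

variable {α : Type*} [DecidableEq α] (G : Pregeometry α)

/-- Closure of an arbitrary subset. -/
def cl (Y : Set α) : Set α :=
  {x | ∃ A : Finset α, ↑A ⊆ Y ∧ G.dim (insert x A) = G.dim A}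

/-- `Y` is closed (in the ambient pregeometry `G`). -/
def IsClosed (Y : Set α) : Prop := G.cl Y = Y

/-- `X` is a closed set of the subpregeometry of `G` induced on `P`
(whose closure operator is `Y ↦ cl Y ∩ P`). -/
def IsClosedIn (P X : Set α) : Prop := X ⊆ P ∧ G.cl X ∩ P = X

/-- Dimension of an arbitrary subset, with value `⊤` when infinite-dimensional. -/
noncomputable def edim (Y : Set α) : ℕ∞ :=
  ⨆ (A : Finset α) (_ : ↑A ⊆ Y), (G.dim A : ℕ∞)

/-- The (natural number) dimension of a finite-dimensional subset. -/
noncomputable def sdim (Y : Set α) : ℕ := (G.edim Y).toNat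

/-- The alternating inclusion–exclusion sum
`Δ_G(Σ) = Σ_{∅ ≠ S ⊆ Σ} (-1)^{|S|+1} d(⋂ S)` of a finite collection of sets. -/
noncomputable def flatSum (Sig : Finset (Set α)) : ℤ :=
  ∑ S ∈ Sig.powerset.filter (· ≠ ∅),
    (-1) ^ (S.card + 1) * (G.sdim (⋂₀ ↑S) : ℤ)

/-- `P ⊑* Q`: for the subpregeometries induced on `P ⊆ Q`, the dimension of the
intersection of two closed sets of `P` equals the dimension of the intersection
of their closures in `Q` (the closure of `X` in `Q` being `cl X ∩ Q`). -/
def SqStar (P Q : Set α) : Prop := P ⊆ Q ∧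
  ∀ X₁ X₂ : Set α, G.IsClosedIn P X₁ → G.IsClosedIn P X₂ →
    G.edim (X₁ ∩ X₂) = G.edim (G.cl X₁ ∩ G.cl X₂ ∩ Q)

/-- `P ⊑ Q`: `P` is strongly embedded in `Q`: for every finite collection `Σ` of
finite-dimensional closed sets of `Q`, `Δ_P(Σ_P) ≤ Δ_Q(Σ)` where
`Σ_P = {E ∩ P : E ∈ Σ}`. -/
def Sq (P Q : Set α) : Prop := P ⊆ Q ∧
  ∀ Sig : Finset (Set α), (∀ E ∈ Sig, G.IsClosedIn Q E) →
    (∀ E ∈ Sig, G.edim E ≠ ⊤) →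
    G.flatSum (Sig.image (· ∩ P)) ≤ G.flatSum Sig

/-- The subpregeometry induced on `P` is flat: every finite collection of
finite-dimensional closed sets satisfies `d(⋃ Σ) ≤ Δ(Σ)`. -/
def FlatIn (P : Set α) : Prop :=
  ∀ Sig : Finset (Set α), (∀ E ∈ Sig, G.IsClosedIn P E) →
    (∀ E ∈ Sig, G.edim E ≠ ⊤) →
    (G.sdim (⋃₀ ↑Sig) : ℤ) ≤ G.flatSum Sig

/-- The α-function of the subpregeometry of `G` induced on `P`:
`α(X) = |X| − d(X) − Σ_{Y ⊊ X closed} α(Y)`. -/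
noncomputable def alphaIn (P : Set α) (X : Finset α) : ℤ :=
  (X.card : ℤ) - (G.dim X : ℤ) -
    ∑ Y ∈ (X.powerset.filter fun Y => Y ≠ X ∧ G.IsClosedIn P ↑Y).attach,
      alphaIn P Y.1
termination_by X.card
decreasing_by
  have h := Y.2
  simp only [Finset.mem_filter, Finset.mem_powerset] at h
  exact Finset.card_lt_card (lt_of_le_of_ne h.1 h.2.1)

end Pregeometry

/-- A hypergraph on the vertex type `α`: a set of nonempty finite edges. -/
structure Hypergraph' (α : Type*) where
  edges : Set (Finset α)
  nonempty_edges : ∀ e ∈ edges, e ≠ ∅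

namespace Hypergraph'

variable {α : Type*} [DecidableEq α] (A : Hypergraph' α)

/-- The set of edges contained in a set of vertices. -/
def edgesIn (P : Set α) : Set (Finset α) := {e | e ∈ A.edges ∧ ↑e ⊆ P}

/-- The predimension `δ(P) = |P| − |R[P]|` of a finite set of vertices. -/
noncomputable def delta (P : Finset α) : ℤ :=
  (P.card : ℤ) - (A.edgesIn ↑P).ncard

/-- The relative predimension `δ(L/P) = |L∖P| − |R[L∪P]∖R[P]|`. -/
noncomputable def deltaRel (L : Finset α) (P : Set α) : ℤ :=
  ((↑L \ P : Set α).ncard : ℤ) -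
    ({e | e ∈ A.edges ∧ ↑e ⊆ ↑L ∪ P ∧ ¬ ↑e ⊆ P} : Set (Finset α)).ncard

/-- `P` is self-sufficient in `A`: `δ(X/P) ≥ 0` for every finite `X`, stated so
as to be meaningful even when infinitely many edges are involved. -/
def SelfSuff (P : Set α) : Prop :=
  ∀ X : Finset α, ∀ Es : Finset (Finset α),
    (∀ e ∈ Es, e ∈ A.edges ∧ ↑e ⊆ ↑X ∪ P ∧ ¬ ↑e ⊆ P) →
    (Es.card : ℤ) ≤ ((↑X \ P : Set α).ncard : ℤ)

/-- The dimension function associated to a hypergraph: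
`d(X) = inf {δ(B) : X ⊆ B finite}`. -/
noncomputable def hdim (X : Finset α) : ℤ :=
  sInf {d : ℤ | ∃ B : Finset α, X ⊆ B ∧ d = A.delta B}

/-- The induced subhypergraph on a set `P` of vertices (keeping `α` as the
ambient vertex type). -/
def restrict (P : Set α) : Hypergraph' α :=
  ⟨{e | e ∈ A.edges ∧ ↑e ⊆ P}, fun e he => A.nonempty_edges e he.1⟩

/-- A pregeometry `G` is represented by the hypergraph `A` if the associated
dimension function of `A` is the dimension function of `G`. -/
def Represents (G : Pregeometry α) : Prop :=
  ∀ X : Finset α, (G.dim X : ℤ) = A.hdim X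

end Hypergraph'

namespace Pregeometry

variable {α : Type*} [DecidableEq α] (G : Pregeometry α)

lemma dim_le_dim_union (A B : Finset α) : G.dim A ≤ G.dim (B ∪ A) := by
  induction B using Finset.induction_on with
  | empty => simp
  | @insert x B _ ih =>
    rw [Finset.insert_union]
    exact ih.trans (G.dim_le_insert _ _)

lemma dim_mono {A B : Finset α} (h : A ⊆ B) : G.dim A ≤ G.dim B :=
  Finset.union_eq_left.2 h ▸ G.dim_le_dim_union A B

lemma dim_insert_union_le {x : α} {A : Finset α} (hx : G.dim (insert x A) = G.dim A)
    (B : Finset α) : G.dim (insert x (A ∪ B)) ≤ G.dim (A ∪ B) := by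
  have hsub := G.submodular (insert x A) (A ∪ B)
  rw [Finset.insert_union, ← Finset.union_assoc, Finset.union_self, hx] at hsub
  have : G.dim A ≤ G.dim (insert x A ∩ (A ∪ B)) :=
    G.dim_mono (Finset.subset_inter (Finset.subset_insert x A) Finset.subset_union_left)
  omega

lemma dim_le_edim {A : Finset α} {S : Set α} (hA : ↑A ⊆ S) :
    (G.dim A : ℕ∞) ≤ G.edim S :=
  le_iSup₂ (f := fun (A : Finset α) (_ : ↑A ⊆ S) => (G.dim A : ℕ∞)) A hA

lemma edim_mono {S T : Set α} (h : S ⊆ T) : G.edim S ≤ G.edim T :=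
  iSup₂_le fun _ hA => G.dim_le_edim (hA.trans h)

lemma exists_dim_eq_edim {S : Set α} (h : G.edim S ≠ ⊤) :
    ∃ A : Finset α, ↑A ⊆ S ∧ (G.dim A : ℕ∞) = G.edim S := by
  have : Nonempty {A : Finset α // ↑A ⊆ S} := ⟨⟨∅, by simp⟩⟩
  rw [edim, iSup_subtype'] at h ⊢
  obtain ⟨⟨A, hA⟩, hmax⟩ := ENat.exists_eq_iSup_of_lt_top (lt_top_iff_ne_top.2 h)
  exact ⟨A, hA, hmax⟩

lemma edim_empty : G.edim ∅ = 0 :=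
  nonpos_iff_eq_zero.1 <| iSup₂_le fun A hA => by
    simp [Finset.coe_eq_empty.1 (Set.subset_empty_iff.1 hA), G.dim_empty]

lemma edim_union_le (S T : Set α) : G.edim (S ∪ T) ≤ G.edim S + G.edim T := by
  refine iSup₂_le fun A hA => ?_
  have hS : ↑(A.filter (· ∈ S)) ⊆ S := fun a ha => (Finset.mem_filter.1 ha).2
  have hT : ↑(A.filter (· ∉ S)) ⊆ T := fun a ha =>
    ((hA (Finset.mem_filter.1 ha).1).resolve_left (Finset.mem_filter.1 ha).2)
  have hsub := G.submodular (A.filter (· ∈ S)) (A.filter (· ∉ S))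
  rw [Finset.filter_union_filter_not_eq] at hsub
  calc (G.dim A : ℕ∞) ≤ G.dim (A.filter (· ∈ S)) + G.dim (A.filter (· ∉ S)) := by
        exact_mod_cast (Nat.le_add_right _ _).trans hsub
  _ ≤ G.edim S + G.edim T := add_le_add (G.dim_le_edim hS) (G.dim_le_edim hT)

lemma edim_sUnion_ne_top (s : Finset (Set α)) (h : ∀ E ∈ s, G.edim E ≠ ⊤) :
    G.edim (⋃₀ ↑s) ≠ ⊤ := by
  induction s using Finset.induction_on with
  | empty => simp [G.edim_empty]
  | @insert X t _ ih =>
    rw [Finset.coe_insert, Set.sUnion_insert]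
    refine ne_top_of_le_ne_top (WithTop.add_ne_top.2 ⟨h X (Finset.mem_insert_self X t),
      ih fun E hE => h E (Finset.mem_insert_of_mem hE)⟩) (G.edim_union_le _ _)

lemma subset_cl (Y : Set α) : Y ⊆ G.cl Y := fun x hx =>
  ⟨{x}, by simpa, by rw [Finset.insert_eq_self.2 (Finset.mem_singleton_self x)]⟩

lemma cl_mono {X Y : Set α} (h : X ⊆ Y) : G.cl X ⊆ G.cl Y := fun _ ⟨A, hA, hd⟩ =>
  ⟨A, hA.trans h, hd⟩

/-- A finite `B ⊆ X` of full dimension witnesses every dependency on `W`. -/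
lemma cl_subset_cl_of_edim_le {X W : Set α} (hXW : X ⊆ W) (hle : G.edim W ≤ G.edim X)
    (hfin : G.edim X ≠ ⊤) : G.cl W ⊆ G.cl X := by
  rintro x ⟨A, hAW, hx⟩
  obtain ⟨B, hBX, hB⟩ := G.exists_dim_eq_edim hfin
  have hAB : G.dim (A ∪ B) ≤ G.dim B := by
    have hABW : ↑(A ∪ B) ⊆ W := by
      rw [Finset.coe_union]
      exact Set.union_subset hAW (hBX.trans hXW)
    exact_mod_cast (G.dim_le_edim hABW).trans (hB ▸ hle)
  refine ⟨B, hBX, le_antisymm ?_ (G.dim_le_insert B x)⟩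
  calc G.dim (insert x B) ≤ G.dim (insert x (A ∪ B)) :=
        G.dim_mono (Finset.insert_subset_insert x Finset.subset_union_right)
  _ ≤ G.dim (A ∪ B) := G.dim_insert_union_le hx B
  _ ≤ G.dim B := hAB

variable {G}

lemma IsClosedIn.inter {P X Y : Set α} (hX : G.IsClosedIn P X) (hY : G.IsClosedIn P Y) :
    G.IsClosedIn P (X ∩ Y) := by
  refine ⟨Set.inter_subset_left.trans hX.1, Set.Subset.antisymm ?_ fun x hx =>
    ⟨G.subset_cl _ hx, hX.1 hx.1⟩⟩
  rintro x ⟨hxcl, hxP⟩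
  rw [← hX.2, ← hY.2]
  exact ⟨⟨G.cl_mono Set.inter_subset_left hxcl, hxP⟩,
    ⟨G.cl_mono Set.inter_subset_right hxcl, hxP⟩⟩

lemma IsClosedIn.sInter {P : Set α} {s : Finset (Set α)} (hs : s.Nonempty)
    (hcl : ∀ E ∈ s, G.IsClosedIn P E) : G.IsClosedIn P (⋂₀ ↑s) := by
  induction hs using Finset.Nonempty.cons_induction with
  | singleton X => simpa using hcl X (by simp)
  | cons X t _ _ ih =>
    rw [Finset.coe_cons, Set.sInter_insert]
    exact (hcl X (by simp)).inter (ih fun E hE => hcl E (by simp [hE]))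

lemma flatSum_image {f : Set α → Set α} {Sig : Finset (Set α)} (hf : Set.InjOn f ↑Sig)
    (h : ∀ S ⊆ Sig, S.Nonempty → G.sdim (⋂₀ ↑(S.image f)) = G.sdim (⋂₀ ↑S)) :
    G.flatSum (Sig.image f) = G.flatSum Sig := by
  unfold flatSum
  rw [Finset.powerset_image, Finset.filter_image, Finset.sum_image]
  · simp only [ne_eq, Finset.image_eq_empty]
    refine Finset.sum_congr rfl fun S hS => ?_
    simp only [Finset.mem_filter, Finset.mem_powerset,
      ← Finset.nonempty_iff_ne_empty] at hS
    rw [Finset.card_image_of_injOn (hf.mono hS.1), h S hS.1 hS.2]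
  · intro S hS T hT hST
    simp only [Finset.coe_filter, Finset.mem_powerset, Set.mem_ofPred_eq] at hS hT
    rw [← Finset.coe_inj, Finset.coe_image, Finset.coe_image] at hST
    exact Finset.coe_inj.1 ((hf.image_eq_image_iff (Finset.coe_subset.2 hS.1)
      (Finset.coe_subset.2 hT.1)).1 hST)

namespace SqStar

variable {H : Set α}

lemma edim_cl (hH : G.SqStar H Set.univ) {X : Set α} (hX : G.IsClosedIn H X) :
    G.edim (G.cl X) = G.edim X := by
  simpa using (hH.2 X X hX hX).symm

lemma cl_cl (hH : G.SqStar H Set.univ) {X : Set α} (hX : G.IsClosedIn H X)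
    (hfin : G.edim X ≠ ⊤) : G.cl (G.cl X) = G.cl X :=
  (G.cl_subset_cl_of_edim_le (G.subset_cl X) (hH.edim_cl hX).le hfin).antisymm (G.subset_cl _)

lemma cl_inter (hH : G.SqStar H Set.univ) {X Y : Set α} (hX : G.IsClosedIn H X)
    (hY : G.IsClosedIn H Y) (hfin : G.edim X ≠ ⊤) : G.cl (X ∩ Y) = G.cl X ∩ G.cl Y := by
  refine Set.Subset.antisymm (Set.subset_inter (G.cl_mono Set.inter_subset_left)
    (G.cl_mono Set.inter_subset_right)) ?_
  refine (G.subset_cl _).trans (G.cl_subset_cl_of_edim_le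
    (Set.inter_subset_inter (G.subset_cl X) (G.subset_cl Y)) ?_
    (ne_top_of_le_ne_top hfin (G.edim_mono Set.inter_subset_left)))
  simpa using (hH.2 X Y hX hY).symm.le

lemma cl_sInter (hH : G.SqStar H Set.univ) {s : Finset (Set α)} (hs : s.Nonempty)
    (hcl : ∀ E ∈ s, G.IsClosedIn H E) (hfin : ∀ E ∈ s, G.edim E ≠ ⊤) :
    G.cl (⋂₀ ↑s) = ⋂₀ ↑(s.image G.cl) := by
  induction hs using Finset.Nonempty.cons_induction with
  | singleton X => simp
  | cons X t _ ht ih =>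
    have hclt : ∀ E ∈ t, G.IsClosedIn H E := fun E hE => hcl E (by simp [hE])
    rw [Finset.coe_cons, Set.sInter_insert, Finset.cons_eq_insert, Finset.image_insert,
      Finset.coe_insert, Set.sInter_insert,
      hH.cl_inter (hcl X (by simp)) (IsClosedIn.sInter ht hclt) (hfin X (by simp)),
      ih hclt fun E hE => hfin E (by simp [hE])]

lemma edim_sInter_image_cl (hH : G.SqStar H Set.univ) {s : Finset (Set α)} (hs : s.Nonempty)
    (hcl : ∀ E ∈ s, G.IsClosedIn H E) (hfin : ∀ E ∈ s, G.edim E ≠ ⊤) :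
    G.edim (⋂₀ ↑(s.image G.cl)) = G.edim (⋂₀ ↑s) := by
  rw [← hH.cl_sInter hs hcl hfin, hH.edim_cl (IsClosedIn.sInter hs hcl)]

lemma flatSum_image_cl (hH : G.SqStar H Set.univ) {Sig : Finset (Set α)}
    (hcl : ∀ E ∈ Sig, G.IsClosedIn H E) (hfin : ∀ E ∈ Sig, G.edim E ≠ ⊤) :
    G.flatSum (Sig.image G.cl) = G.flatSum Sig := by
  refine flatSum_image (fun X hX Y hY hXY => ?_) fun S hS hne => ?_
  · rw [← (hcl X hX).2, ← (hcl Y hY).2, hXY]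
  · exact congrArg ENat.toNat (hH.edim_sInter_image_cl hne (fun E hE => hcl E (hS hE))
      fun E hE => hfin E (hS hE))

end SqStar

end Pregeometry

/-- if `H ⊑* G` and `G` is flat, then `H` is flat. -/
theorem flatIn_of_sqStar {α : Type*} [DecidableEq α] (G : Pregeometry α)
    (H : Set α) (hH : G.SqStar H Set.univ) (hG : G.FlatIn Set.univ) :
    G.FlatIn H := by
  intro Sig hcl hfin
  have hcl' : ∀ E ∈ Sig.image G.cl, G.IsClosedIn Set.univ E := by
    simp only [Finset.mem_image, forall_exists_index, and_imp, forall_apply_eq_imp_iff₂]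
    exact fun X hX =>
      ⟨Set.subset_univ _, by rw [Set.inter_univ, hH.cl_cl (hcl X hX) (hfin X hX)]⟩
  have hfin' : ∀ E ∈ Sig.image G.cl, G.edim E ≠ ⊤ := by
    simp only [Finset.mem_image, forall_exists_index, and_imp, forall_apply_eq_imp_iff₂]
    exact fun X hX => hH.edim_cl (hcl X hX) ▸ hfin X hX
  have hunion : ⋃₀ ↑Sig ⊆ ⋃₀ (↑(Sig.image G.cl) : Set (Set α)) := by
    rw [Finset.coe_image, Set.sUnion_image]
    exact Set.sUnion_subset fun X hX => (G.subset_cl X).trans (Set.subset_biUnion_of_mem hX)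
  calc (G.sdim (⋃₀ ↑Sig) : ℤ) ≤ G.sdim (⋃₀ ↑(Sig.image G.cl)) := by
        exact_mod_cast ENat.toNat_le_toNat (G.edim_mono hunion) (G.edim_sUnion_ne_top _ hfin')
  _ ≤ G.flatSum (Sig.image G.cl) := hG _ hcl' hfin'
  _ = G.flatSum Sig := hH.flatSum_image_cl hcl hfin
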